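/- arXiv:1710.03340 — 2 statements merged into one kernel-verified Lean document; each statement's English description precedes it below -/
import Mathlib

section
/- Let k ≥ 2 be an integer and set M := ⌊(2k−2)/3⌋ − ε, where ε = 1 if k ≡ 1 (mod 3) and ε = 0 otherwise. Then in ℤ[q,t]: Σ_{i=0}^{k} V(i, k−i) = (t−q) · Σ_{i=0}^{M} (qt)^i · [ k−i−⌊(i+1)/2⌋ → 2k−2−3i ]_{q,t}. (In the paper's notation this says g_λ[0,0,k] = Σ_{i=0}^{M} (qt)^i [k−i−⌊(i+1)/2⌋ → 2k−2−3i]_{q,t}.) -/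
open MvPolynomial

noncomputable section

abbrev Zqt : Type := MvPolynomial (Fin 2) ℤ

def q : Zqt := X 0
def t : Zqt := X 1

/-- The two-parameter analogue `[m]_{a,b} = ∑_{r=0}^{m-1} a^(m-1-r) b^r`. -/
def ban (a b : Zqt) (m : ℕ) : Zqt := ∑ r ∈ Finset.range m, a ^ (m - 1 - r) * b ^ r

/-- `[m]_{q,t}`. -/
def qtn (m : ℕ) : Zqt := ban q t m

/-- `[n → m]_{q,t} = ∑_{p=n}^{m} [p]_{q,t}`. -/
def qtIcc (n m : ℕ) : Zqt := ∑ p ∈ Finset.Icc n m, qtn p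

/-- `V(ω₁,ω₂) = t^{ω₁}·[ω₂]_{t²,q} − q^{ω₁}·[ω₂]_{q²,t} = (t−q)·w(ω₁,ω₂)`. -/
def V (ω₁ ω₂ : ℕ) : Zqt := t ^ ω₁ * ban (t ^ 2) q ω₂ - q ^ ω₁ * ban (q ^ 2) t ω₂

lemma geom_aux (p : ℕ) : (t - q) * qtn p = t ^ p - q ^ p := by
  rw [qtn, ban, ← geom_sum₂_mul t q p, mul_comm]
  congr 1
  exact Finset.sum_congr rfl fun r _ => mul_comm _ _

lemma sumA (k : ℕ) (hk : 2 ≤ k) :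
    ∑ i ∈ Finset.range (k + 1), t ^ i * ban (t ^ 2) q (k - i)
      = ∑ x ∈ Finset.range (2 * k) ×ˢ Finset.range (2 * k),
          if x.1 < k ∧ k ≤ x.1 + x.2 + 1 ∧ x.2 + 2 * x.1 + 2 ≤ 2 * k
          then q ^ x.1 * t ^ x.2 else 0 := by
  rw [← Finset.sum_filter]
  simp only [ban, Finset.mul_sum]
  rw [Finset.sum_sigma']
  refine Finset.sum_nbij' (fun x => (x.2, 2 * k - 2 - x.1 - 2 * x.2))
    (fun y => ⟨2 * k - 2 - 2 * y.1 - y.2, y.1⟩) ?_ ?_ ?_ ?_ ?_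
  · rintro ⟨i, r⟩ hx
    simp only [Finset.mem_sigma, Finset.mem_range] at hx
    simp only [Finset.mem_filter, Finset.mem_product, Finset.mem_range]
    omega
  · rintro ⟨a, b⟩ hy
    simp only [Finset.mem_filter, Finset.mem_product, Finset.mem_range] at hy
    simp only [Finset.mem_sigma, Finset.mem_range]
    omega
  · rintro ⟨i, r⟩ hx
    simp only [Finset.mem_sigma, Finset.mem_range] at hx
    dsimp only
    have h1 : 2 * k - 2 - 2 * r - (2 * k - 2 - i - 2 * r) = i := by omega
    rw [h1]
  · rintro ⟨a, b⟩ hy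
    simp only [Finset.mem_filter, Finset.mem_product, Finset.mem_range] at hy
    dsimp only
    have h1 : 2 * k - 2 - (2 * k - 2 - 2 * a - b) - 2 * a = b := by omega
    rw [h1]
  · rintro ⟨i, r⟩ hx
    simp only [Finset.mem_sigma, Finset.mem_range] at hx
    dsimp only
    have he : 2 * k - 2 - i - 2 * r = i + 2 * (k - i - 1 - r) := by omega
    rw [he, pow_add, pow_mul]
    ring

lemma sumB (k : ℕ) (hk : 2 ≤ k) :
    ∑ i ∈ Finset.range (k + 1), q ^ i * ban (q ^ 2) t (k - i)
      = ∑ x ∈ Finset.range (2 * k) ×ˢ Finset.range (2 * k),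
          if x.2 < k ∧ k ≤ x.1 + x.2 + 1 ∧ x.1 + 2 * x.2 + 2 ≤ 2 * k
          then q ^ x.1 * t ^ x.2 else 0 := by
  rw [← Finset.sum_filter]
  simp only [ban, Finset.mul_sum]
  rw [Finset.sum_sigma']
  refine Finset.sum_nbij' (fun x => (2 * k - 2 - x.1 - 2 * x.2, x.2))
    (fun y => ⟨2 * k - 2 - 2 * y.2 - y.1, y.2⟩) ?_ ?_ ?_ ?_ ?_
  · rintro ⟨i, r⟩ hx
    simp only [Finset.mem_sigma, Finset.mem_range] at hx
    simp only [Finset.mem_filter, Finset.mem_product, Finset.mem_range]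
    omega
  · rintro ⟨a, b⟩ hy
    simp only [Finset.mem_filter, Finset.mem_product, Finset.mem_range] at hy
    simp only [Finset.mem_sigma, Finset.mem_range]
    omega
  · rintro ⟨i, r⟩ hx
    simp only [Finset.mem_sigma, Finset.mem_range] at hx
    dsimp only
    have h1 : 2 * k - 2 - 2 * r - (2 * k - 2 - i - 2 * r) = i := by omega
    rw [h1]
  · rintro ⟨a, b⟩ hy
    simp only [Finset.mem_filter, Finset.mem_product, Finset.mem_range] at hy
    dsimp only
    have h1 : 2 * k - 2 - (2 * k - 2 - 2 * b - a) - 2 * b = a := by omega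
    rw [h1]
  · rintro ⟨i, r⟩ hx
    simp only [Finset.mem_sigma, Finset.mem_range] at hx
    dsimp only
    have he : 2 * k - 2 - i - 2 * r = i + 2 * (k - i - 1 - r) := by omega
    rw [he, pow_add, pow_mul]
    ring

lemma sumC (k M : ℕ) (hk : 2 ≤ k) (hM : M < 2 * k) :
    ∑ i ∈ Finset.range (M + 1), ∑ p ∈ Finset.Icc (k - i - (i + 1) / 2) (2 * k - 2 - 3 * i),
        q ^ i * t ^ (i + p)
      = ∑ x ∈ Finset.range (2 * k) ×ˢ Finset.range (2 * k),
          if x.1 < M + 1 ∧ x.1 ≤ x.2 ∧ k - x.1 - (x.1 + 1) / 2 ≤ x.2 - x.1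
              ∧ x.2 - x.1 ≤ 2 * k - 2 - 3 * x.1
          then q ^ x.1 * t ^ x.2 else 0 := by
  rw [← Finset.sum_filter]
  rw [Finset.sum_sigma']
  refine Finset.sum_nbij' (fun x => (x.1, x.1 + x.2))
    (fun y => ⟨y.1, y.2 - y.1⟩) ?_ ?_ ?_ ?_ ?_
  · rintro ⟨i, p⟩ hx
    simp only [Finset.mem_sigma, Finset.mem_range, Finset.mem_Icc] at hx
    simp only [Finset.mem_filter, Finset.mem_product, Finset.mem_range]
    omega
  · rintro ⟨a, b⟩ hy
    simp only [Finset.mem_filter, Finset.mem_product, Finset.mem_range] at hy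
    simp only [Finset.mem_sigma, Finset.mem_range, Finset.mem_Icc]
    omega
  · rintro ⟨i, p⟩ hx
    dsimp only
    have h1 : i + p - i = p := by omega
    rw [h1]
  · rintro ⟨a, b⟩ hy
    simp only [Finset.mem_filter, Finset.mem_product, Finset.mem_range] at hy
    dsimp only
    have h1 : a + (b - a) = b := by omega
    rw [h1]
  · rintro ⟨i, p⟩ hx
    rfl

lemma sumD (k M : ℕ) (hk : 2 ≤ k) (hM : M < 2 * k) :
    ∑ i ∈ Finset.range (M + 1), ∑ p ∈ Finset.Icc (k - i - (i + 1) / 2) (2 * k - 2 - 3 * i),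
        q ^ (i + p) * t ^ i
      = ∑ x ∈ Finset.range (2 * k) ×ˢ Finset.range (2 * k),
          if x.2 < M + 1 ∧ x.2 ≤ x.1 ∧ k - x.2 - (x.2 + 1) / 2 ≤ x.1 - x.2
              ∧ x.1 - x.2 ≤ 2 * k - 2 - 3 * x.2
          then q ^ x.1 * t ^ x.2 else 0 := by
  rw [← Finset.sum_filter]
  rw [Finset.sum_sigma']
  refine Finset.sum_nbij' (fun x => (x.1 + x.2, x.1))
    (fun y => ⟨y.2, y.1 - y.2⟩) ?_ ?_ ?_ ?_ ?_
  · rintro ⟨i, p⟩ hx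
    simp only [Finset.mem_sigma, Finset.mem_range, Finset.mem_Icc] at hx
    simp only [Finset.mem_filter, Finset.mem_product, Finset.mem_range]
    omega
  · rintro ⟨a, b⟩ hy
    simp only [Finset.mem_filter, Finset.mem_product, Finset.mem_range] at hy
    simp only [Finset.mem_sigma, Finset.mem_range, Finset.mem_Icc]
    omega
  · rintro ⟨i, p⟩ hx
    dsimp only
    have h1 : i + p - i = p := by omega
    rw [h1]
  · rintro ⟨a, b⟩ hy
    simp only [Finset.mem_filter, Finset.mem_product, Finset.mem_range] at hy
    dsimp only
    have h1 : b + (a - b) = a := by omega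
    rw [h1]
  · rintro ⟨i, p⟩ hx
    rfl

theorem stmt4 (k : ℕ) (hk : 2 ≤ k) :
    ∑ i ∈ Finset.range (k + 1), V i (k - i) =
      (t - q) *
        ∑ i ∈ Finset.range ((2 * k - 2) / 3 - (if k % 3 = 1 then 1 else 0) + 1),
          (q * t) ^ i * qtIcc (k - i - (i + 1) / 2) (2 * k - 2 - 3 * i) := by
  obtain ⟨M, hMeq, hM'⟩ : ∃ M, (2 * k - 2) / 3 - (if k % 3 = 1 then 1 else 0) = M ∧
      ((k % 3 = 1 ∧ M + 1 = (2 * k - 2) / 3) ∨ (¬ k % 3 = 1 ∧ M = (2 * k - 2) / 3)) := by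
    refine ⟨(2 * k - 2) / 3 - (if k % 3 = 1 then 1 else 0), rfl, ?_⟩
    by_cases h : k % 3 = 1
    · exact Or.inl ⟨h, by rw [if_pos h]; omega⟩
    · exact Or.inr ⟨h, by rw [if_neg h]; omega⟩
  rw [hMeq]
  have hM : M < 2 * k := by omega
  have hR : (t - q) *
        ∑ i ∈ Finset.range (M + 1),
          (q * t) ^ i * qtIcc (k - i - (i + 1) / 2) (2 * k - 2 - 3 * i)
      = (∑ i ∈ Finset.range (M + 1),
          ∑ p ∈ Finset.Icc (k - i - (i + 1) / 2) (2 * k - 2 - 3 * i), q ^ i * t ^ (i + p))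
        - ∑ i ∈ Finset.range (M + 1),
          ∑ p ∈ Finset.Icc (k - i - (i + 1) / 2) (2 * k - 2 - 3 * i), q ^ (i + p) * t ^ i := by
    rw [Finset.mul_sum, ← Finset.sum_sub_distrib]
    refine Finset.sum_congr rfl fun i _ => ?_
    rw [← Finset.sum_sub_distrib, qtIcc, Finset.mul_sum, Finset.mul_sum]
    refine Finset.sum_congr rfl fun p _ => ?_
    have h2 : (t - q) * ((q * t) ^ i * qtn p) = (q * t) ^ i * ((t - q) * qtn p) := by ring
    rw [h2, geom_aux, mul_pow, pow_add, pow_add]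
    ring
  rw [hR, sumC k M hk hM, sumD k M hk hM]
  have hL : ∑ i ∈ Finset.range (k + 1), V i (k - i)
      = (∑ i ∈ Finset.range (k + 1), t ^ i * ban (t ^ 2) q (k - i))
        - ∑ i ∈ Finset.range (k + 1), q ^ i * ban (q ^ 2) t (k - i) := by
    rw [← Finset.sum_sub_distrib]
    rfl
  rw [hL, sumA k hk, sumB k hk, ← Finset.sum_sub_distrib, ← Finset.sum_sub_distrib]
  refine Finset.sum_congr rfl fun x hx => ?_
  rcases hM' with ⟨h3, hMe⟩ | ⟨h3, hMe⟩ <;>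
    split_ifs <;> first | ring1 | (exfalso; omega)

end
end

section
/- Let k ≥ 2 be an integer and set M := ⌊(2k−2)/3⌋ − ε, where ε = 1 if k ≡ 1 (mod 3) and ε = 0 otherwise. Then Σ_{i=0}^{M} Σ_{p = k−i−⌊(i+1)/2⌋}^{2k−2−3i} p = 2·binom(k+1, 3). (This is the specialization q = t = 1 of the formula for g_λ[0,0,k], reflecting that ⟨Δ_{e_2} e_n, e_n⟩|_{q=t=1} = 2·binom(n+2,4).) -/
lemma ch2' : ∀ n : ℕ, 2 * Nat.choose (n + 2) 2 = (n + 1) * (n + 2) := by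
  intro n
  induction n with
  | zero => decide
  | succ n ih =>
    have : (n + 3).choose 2 = (n + 2).choose 1 + (n + 2).choose 2 :=
      Nat.choose_succ_succ _ _
    rw [show n + 1 + 2 = n + 3 from rfl, this, Nat.choose_one_right, Nat.mul_add, ih]
    ring

lemma ch3' : ∀ n : ℕ, 6 * Nat.choose (n + 3) 3 = (n + 1) * (n + 2) * (n + 3) := by
  intro n
  induction n with
  | zero => decide
  | succ n ih =>
    have h : (n + 4).choose 3 = (n + 3).choose 2 + (n + 3).choose 3 :=
      Nat.choose_succ_succ _ _
    have h2 := ch2' (n + 1)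
    rw [show n + 1 + 3 = n + 4 from rfl, h, Nat.mul_add, ih,
      show (6 : ℕ) * (n + 3).choose 2 = 3 * (2 * (n + 1 + 2).choose 2) from by ring_nf, h2]
    ring

lemma gauss' (a b : ℕ) (h : a ≤ b + 1) :
    (∑ p ∈ Finset.Icc a b, p) * 2 + a * (a - 1) = (b + 1) * b := by
  have h3 : (∑ i ∈ Finset.Ico 0 a, i) + ∑ i ∈ Finset.Ico a (b + 1), i =
      ∑ i ∈ Finset.Ico 0 (b + 1), i :=
    Finset.sum_Ico_consecutive _ (Nat.zero_le a) h
  have h1 := Finset.sum_range_id_mul_two a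
  have h2 := Finset.sum_range_id_mul_two (b + 1)
  rw [Nat.add_sub_cancel] at h2
  rw [Finset.range_eq_Ico] at h1 h2
  rw [← Finset.Ico_add_one_right_eq_Icc]
  nlinarith [h1, h2, h3]

theorem stmt15 (k : ℕ) (hk : 2 ≤ k) :
    ∑ i ∈ Finset.range ((2 * k - 2) / 3 - (if k % 3 = 1 then 1 else 0) + 1),
        ∑ p ∈ Finset.Icc (k - i - (i + 1) / 2) (2 * k - 2 - 3 * i), p =
      2 * Nat.choose (k + 1) 3 := by
  revert hk
  induction k using Nat.strong_induction_on with
  | _ k ih =>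
    intro hk
    rcases lt_or_ge k 5 with h5 | h5
    · interval_cases k <;> decide
    · obtain ⟨n, rfl⟩ : ∃ n, k = n + 5 := ⟨k - 5, by omega⟩
      have IH := ih (n + 2) (by omega) (by omega)
      have hmod : (n + 5) % 3 = (n + 2) % 3 := by omega
      rw [hmod]
      have hcount : (2 * (n + 5) - 2) / 3 - (if (n + 2) % 3 = 1 then 1 else 0) + 1 =
          ((2 * (n + 2) - 2) / 3 - (if (n + 2) % 3 = 1 then 1 else 0) + 1) + 1 + 1 := by
        split_ifs <;> omega
      rw [hcount, Finset.sum_range_succ', Finset.sum_range_succ']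
      have hshift : ∑ i ∈ Finset.range
            ((2 * (n + 2) - 2) / 3 - (if (n + 2) % 3 = 1 then 1 else 0) + 1),
            ∑ p ∈ Finset.Icc (n + 5 - (i + 1 + 1) - ((i + 1 + 1) + 1) / 2)
              (2 * (n + 5) - 2 - 3 * (i + 1 + 1)), p =
          ∑ i ∈ Finset.range
            ((2 * (n + 2) - 2) / 3 - (if (n + 2) % 3 = 1 then 1 else 0) + 1),
            ∑ p ∈ Finset.Icc (n + 2 - i - (i + 1) / 2) (2 * (n + 2) - 2 - 3 * i), p := by
        refine Finset.sum_congr rfl fun i _ => ?_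
        rw [show n + 5 - (i + 1 + 1) - ((i + 1 + 1) + 1) / 2
              = n + 2 - i - (i + 1) / 2 from by omega,
            show 2 * (n + 5) - 2 - 3 * (i + 1 + 1) = 2 * (n + 2) - 2 - 3 * i from by omega]
      rw [hshift, IH]
      rw [show n + 5 - (0 + 1) - (0 + 1 + 1) / 2 = n + 3 from by omega,
          show 2 * (n + 5) - 2 - 3 * (0 + 1) = 2 * n + 5 from by omega,
          show n + 5 - 0 - (0 + 1) / 2 = n + 5 from by omega,
          show 2 * (n + 5) - 2 - 3 * 0 = 2 * n + 8 from by omega]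
      have g1 := gauss' (n + 3) (2 * n + 5) (by omega)
      have g2 := gauss' (n + 5) (2 * n + 8) (by omega)
      have c1 := ch3' n
      have c2 := ch3' (n + 3)
      rw [show n + 2 + 1 = n + 3 from rfl, show n + 5 + 1 = n + 6 from rfl]
      rw [show n + 3 - 1 = n + 2 from by omega] at g1
      rw [show n + 5 - 1 = n + 4 from by omega] at g2
      rw [show n + 3 + 3 = n + 6 from rfl] at c2
      nlinarith [g1, g2, c1, c2]
end
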